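/- For any pointed item e, R(•(e)) = nf_ε(|e|) ∪ R(e); in particular, for any regular expression e (no points), R(•(e)) = nf_ε(e). -/

import Mathlib

namespace PointedRE

inductive PItem (α : Type) : Type
  | empty : PItem α
  | eps : PItem α
  | ch : α → PItem α
  | pch : α → PItem α
  | plus : PItem α → PItem α → PItem α
  | cat : PItem α → PItem α → PItem α
  | star : PItem α → PItem α

namespace PItem

variable {α : Type}

/-- The carrier: erase all points. -/
def carrier : PItem α → RegularExpression α
  | empty => 0
  | eps => 1
  | ch a => RegularExpression.char a
  | pch a => RegularExpression.char a
  | plus e1 e2 => carrier e1 + carrier e2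
  | cat e1 e2 => carrier e1 * carrier e2
  | star e => (carrier e).star

/-- ε(b) : {ε} if b, ∅ otherwise. -/
def ebool (b : Bool) : Language α := if b then 1 else 0

/-- The pointed language of a pointed item. -/
def Lp : PItem α → Language α
  | empty => 0
  | eps => 0
  | ch _ => 0
  | pch a => {[a]}
  | plus e1 e2 => Lp e1 + Lp e2
  | cat e1 e2 => Lp e1 * (carrier e2).matches' + Lp e2
  | star e => Lp e * KStar.kstar (carrier e).matches'

/-- A pointed regular expression (pre): a pointed item with a trailing boolean. -/
abbrev Pre (α : Type) := PItem α × Bool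

/-- The pointed language of a pre. -/
def LpP (p : Pre α) : Language α := Lp p.1 + ebool p.2

/-- Broadcasting a point inside a pointed item. -/
def broadcast : PItem α → Pre α
  | empty => (empty, false)
  | eps => (eps, true)
  | ch a => (pch a, false)
  | pch a => (pch a, false)
  | plus e1 e2 =>
      (plus (broadcast e1).1 (broadcast e2).1, (broadcast e1).2 || (broadcast e2).2)
  | cat e1 e2 =>
      if (broadcast e1).2 then
        (cat (broadcast e1).1 (broadcast e2).1, (broadcast e2).2)
      else (cat (broadcast e1).1 e2, false)
  | star e => (star (broadcast e).1, true)

/-- Lifted sum on pres. -/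
def oplus (p1 p2 : Pre α) : Pre α := (plus p1.1 p2.1, p1.2 || p2.2)

/-- Lifted concatenation on pres. -/
def odot (p1 p2 : Pre α) : Pre α :=
  if p1.2 then (cat p1.1 (broadcast p2.1).1, p2.2 || (broadcast p2.1).2)
  else (cat p1.1 p2.1, p2.2)

/-- Lifted Kleene star on pres. -/
def ostar (p : Pre α) : Pre α :=
  if p.2 then (star (broadcast p.1).1, true) else (star p.1, false)

/-- Broadcasting extended to pres. -/
def broadcastP (p : Pre α) : Pre α :=
  ((broadcast p.1).1, p.2 || (broadcast p.1).2)

/-- The move operation on pointed items. -/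
def move [DecidableEq α] (a : α) : PItem α → Pre α
  | empty => (empty, false)
  | eps => (eps, false)
  | ch b => (ch b, false)
  | pch b => if b = a then (ch b, true) else (ch b, false)
  | plus e1 e2 => oplus (move a e1) (move a e2)
  | cat e1 e2 => odot (move a e1) (move a e2)
  | star e => ostar (move a e)

/-- The move operation iterated along a string (on pres, ignoring the trailing point). -/
def moves [DecidableEq α] : Pre α → List α → Pre α
  | p, [] => p
  | p, a :: w => moves (move a p.1) w

/-- Embedding of regular expressions as point-free pointed items. -/
def embed : RegularExpression α → PItem α
  | .zero => empty
  | .epsilon => eps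
  | .char a => ch a
  | .plus e1 e2 => plus (embed e1) (embed e2)
  | .comp e1 e2 => cat (embed e1) (embed e2)
  | .star e => star (embed e)

/-- Read-back of a pointed item as a set of regular expressions. -/
def R : PItem α → Set (RegularExpression α)
  | empty => ∅
  | eps => ∅
  | ch _ => ∅
  | pch a => {RegularExpression.char a}
  | plus e1 e2 => R e1 ∪ R e2
  | cat e1 e2 => (fun r => r * carrier e2) '' R e1 ∪ R e2
  | star e => (fun r => r * (carrier e).star) '' R e

/-- Read-back of a pre. -/
def RP (p : Pre α) : Set (RegularExpression α) :=
  R p.1 ∪ (if p.2 then {1} else ∅)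

/-- The language of a set of regular expressions. -/
def LS (S : Set (RegularExpression α)) : Language α :=
  {w | ∃ r ∈ S, w ∈ r.matches'}

/-- The look-ahead normal form of a regular expression (without ε). -/
def nf : RegularExpression α → Set (RegularExpression α)
  | .zero => ∅
  | .epsilon => ∅
  | .char a => {RegularExpression.char a}
  | .plus e1 e2 => nf e1 ∪ nf e2
  | .comp e1 e2 =>
      if e1.matchEpsilon then (fun r => r * e2) '' nf e1 ∪ nf e2
      else (fun r => r * e2) '' nf e1
  | .star e => (fun r => r * e.star) '' nf e

/-- The look-ahead normal form with ε added when the expression is nullable. -/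
def nfe (e : RegularExpression α) : Set (RegularExpression α) :=
  nf e ∪ (if e.matchEpsilon then {1} else ∅)

/-- nf_ε lifted to sets of regular expressions. -/
def nfeS (S : Set (RegularExpression α)) : Set (RegularExpression α) :=
  ⋃ r ∈ S, nfe r

/-- Merge of two pointed items (meaningful when they share the same carrier). -/
def merge : PItem α → PItem α → PItem α
  | ch a, pch _ => pch a
  | plus e1 e2, plus f1 f2 => plus (merge e1 f1) (merge e2 f2)
  | cat e1 e2, cat f1 f2 => cat (merge e1 f1) (merge e2 f2)
  | star e, star f => star (merge e f)
  | e, _ => e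

/-- Merge extended to pres. -/
def mergeP (p q : Pre α) : Pre α := (merge p.1 q.1, p.2 || q.2)

end PItem
end PointedRE

open PointedRE PItem

/-! Broadcasting marks every first position of the carrier, so by induction on `e` its pointed
item reads back as `nf |e| ∪ R e`, while its trailing boolean is exactly the nullability of `|e|`,
which supplies the `ε` of `nf_ε`. A point-free item reads back as `∅`. -/

namespace PointedRE.PItem

variable {α : Type}

@[simp]
lemma carrier_broadcast_fst (e : PItem α) : carrier (broadcast e).1 = carrier e := by
  induction e with
  | plus e1 e2 ih1 ih2 => simp [broadcast, carrier, ih1, ih2]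
  | cat e1 e2 ih1 ih2 => by_cases h : (broadcast e1).2 <;> simp [broadcast, h, carrier, ih1, ih2]
  | star e ih => simp [broadcast, carrier, ih]
  | _ => rfl

lemma broadcast_snd (e : PItem α) : (broadcast e).2 = (carrier e).matchEpsilon := by
  induction e with
  | plus e1 e2 ih1 ih2 => simp [broadcast, carrier, RegularExpression.matchEpsilon, ih1, ih2]
  | cat e1 e2 ih1 ih2 =>
      by_cases h : (broadcast e1).2 <;>
        simp [broadcast, h, carrier, RegularExpression.matchEpsilon, ← ih1, ← ih2]
  | _ => rfl

lemma R_broadcast_fst (e : PItem α) : R (broadcast e).1 = nf (carrier e) ∪ R e := by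
  induction e with
  | plus e1 e2 ih1 ih2 =>
      simp only [broadcast, R, carrier, nf, ih1, ih2]
      ac_rfl
  | cat e1 e2 ih1 ih2 =>
      cases h : (broadcast e1).2
      · have hnull : (carrier e1).matchEpsilon = false := h ▸ (broadcast_snd e1).symm
        simp only [broadcast, h, R, carrier, nf, hnull, ih1, Set.image_union, Bool.false_eq_true,
          if_false]
        ac_rfl
      · have hnull : (carrier e1).matchEpsilon = true := h ▸ (broadcast_snd e1).symm
        simp only [broadcast, h, R, carrier, nf, hnull, ih1, ih2, carrier_broadcast_fst,
          Set.image_union, if_true]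
        ac_rfl
  | star e ih => simp only [broadcast, R, carrier, nf, ih, carrier_broadcast_fst, Set.image_union]
  | _ => simp [broadcast, R, carrier, nf]

lemma RP_broadcast (e : PItem α) : RP (broadcast e) = nfe (carrier e) ∪ R e := by
  simp only [RP, nfe, R_broadcast_fst, broadcast_snd]
  ac_rfl

@[simp]
lemma R_embed (r : RegularExpression α) : R (embed r) = ∅ := by
  induction r with
  | plus r1 r2 ih1 ih2 => simp [embed, R, ih1, ih2]
  | comp r1 r2 ih1 ih2 => simp [embed, R, ih1, ih2]
  | star r ih => simp [embed, R, ih]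
  | _ => rfl

@[simp]
lemma carrier_embed (r : RegularExpression α) : carrier (embed r) = r := by
  induction r with
  | plus r1 r2 ih1 ih2 => simp [embed, carrier, ih1, ih2]
  | comp r1 r2 ih1 ih2 => simp [embed, carrier, ih1, ih2]
  | star r ih => simp [embed, carrier, ih]
  | _ => rfl

end PointedRE.PItem

/-- R(•(e)) = nf_ε(|e|) ∪ R(e); in particular R(•(e)) = nf_ε(e) for pure e. -/
theorem stmt15 {α : Type} :
    (∀ e : PItem α, RP (broadcast e) = nfe (carrier e) ∪ R e) ∧
    (∀ r : RegularExpression α, RP (broadcast (embed r)) = nfe r) :=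
  ⟨RP_broadcast, fun r => by simp [RP_broadcast]⟩
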